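/- Let P be a dynamic path instance with n ≥ 1 and let k ≥ 2 be an integer. If indices i' and i satisfy 0 ≤ i' ≤ i < n and Θ¹(P_{0,i}) < Θ^{k−1}(P_{i+1,n}), then also Θ¹(P_{0,i'}) < Θ^{k−1}(P_{i'+1,n}). That is, the set of indices i ∈ {0,…,n−1} satisfying Θ¹(P_{0,i}) < Θ^{k−1}(P_{i+1,n}) is downward closed. -/

import Mathlib

/-- A dynamic path instance: `n+1` vertices at strictly increasing coordinates
`x 0 < x 1 < ⋯ < x n`, natural-number weights `w i`, positive integer capacities
`c j` (capacity of the edge from `x (j-1)` to `x j`, for `1 ≤ j ≤ n`), and a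
positive travel time `τ` per unit distance. -/
structure DPath where
  n : ℕ
  x : ℕ → ℝ
  w : ℕ → ℕ
  c : ℕ → ℕ
  τ : ℝ
  hx : ∀ i, i < n → x i < x (i + 1)
  hc : ∀ j, 1 ≤ j → j ≤ n → 0 < c j
  hτ : 0 < τ

/-- `P.W a i = w_a + ⋯ + w_i`. -/
def DPath.W (P : DPath) (a i : ℕ) : ℕ := ∑ j ∈ Finset.Icc a i, P.w j

/-- For a sink at `y` in subpath `P_{a,b}`: the minimum capacity
`min_{i+1 ≤ j ≤ k+1} c_j`, where `k` is the index with `x_k < y ≤ x_{k+1}`;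
the edges `j` with `i+1 ≤ j ≤ k+1` are exactly those with `i+1 ≤ j ≤ b` and
`x (j-1) < y`. -/
noncomputable def DPath.cL (P : DPath) (b : ℕ) (y : ℝ) (i : ℕ) : ℕ :=
  sInf (P.c '' {j | i + 1 ≤ j ∧ j ≤ b ∧ P.x (j - 1) < y})

/-- For a sink at `y` in subpath `P_{a,b}`: the minimum capacity
`min_{k+1 ≤ j ≤ i} c_j`, where `k` is the index with `x_k ≤ y < x_{k+1}`;
the edges `j` with `k+1 ≤ j ≤ i` are exactly those with `a+1 ≤ j ≤ i` and
`y < x j`. -/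
noncomputable def DPath.cR (P : DPath) (a : ℕ) (y : ℝ) (i : ℕ) : ℕ :=
  sInf (P.c '' {j | a + 1 ≤ j ∧ j ≤ i ∧ y < P.x j})

/-- Left evacuation time `Θ_L(P_{a,b}, y)`: the maximum, over indices `i` with
`a ≤ i ≤ b`, `x i < y` and `W_{a,i} ≥ 1`, of
`(y − x_i)·τ + ⌈W_{a,i} / min_{i+1 ≤ j ≤ k+1} c_j⌉ − 1`; it is `0` if no such
index exists. -/
noncomputable def ThetaL (P : DPath) (a b : ℕ) (y : ℝ) : ℝ :=
  sSup (insert 0 {t : ℝ | ∃ i, a ≤ i ∧ i ≤ b ∧ P.x i < y ∧ 1 ≤ P.W a i ∧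
    t = (y - P.x i) * P.τ + (⌈(P.W a i : ℝ) / (P.cL b y i : ℝ)⌉ : ℝ) - 1})

/-- Right evacuation time `Θ_R(P_{a,b}, y)`. -/
noncomputable def ThetaR (P : DPath) (a b : ℕ) (y : ℝ) : ℝ :=
  sSup (insert 0 {t : ℝ | ∃ i, a ≤ i ∧ i ≤ b ∧ y < P.x i ∧ 1 ≤ P.W i b ∧
    t = (P.x i - y) * P.τ + (⌈(P.W i b : ℝ) / (P.cR a y i : ℝ)⌉ : ℝ) - 1})

/-- Evacuation time of subpath `P_{a,b}` to sink `y`. -/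
noncomputable def Theta (P : DPath) (a b : ℕ) (y : ℝ) : ℝ :=
  max (ThetaL P a b y) (ThetaR P a b y)

/-- `Θ¹(P_{a,b})`: minimum 1-sink evacuation time of subpath `P_{a,b}`
over sinks `y ∈ [x_a, x_b]`. -/
noncomputable def Theta1 (P : DPath) (a b : ℕ) : ℝ :=
  sInf (Theta P a b '' Set.Icc (P.x a) (P.x b))

/-- `Θᵏ(P_{a,b})`: minimum over all partitions of `{a, …, b}` into at most `k`
nonempty intervals `[f j, f (j+1) - 1]`, of the maximum over the intervals of
`Θ¹`. -/
noncomputable def ThetaK (P : DPath) (k a b : ℕ) : ℝ :=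
  sInf {t : ℝ | ∃ (m : ℕ) (f : ℕ → ℕ), 1 ≤ m ∧ m ≤ k ∧
    f 0 = a ∧ f m = b + 1 ∧ (∀ j, j < m → f j < f (j + 1)) ∧
    t = ⨆ j : Fin m, Theta1 P (f j.val) (f (j.val + 1) - 1)}

/-!
Both sides of the inequality move the right way as `i` decreases. `Θ¹` grows when its subpath is
enlarged: clamping a sink of the larger subpath into the smaller one, every term of the evacuation
time can only grow, since the accumulated weights increase and the bottleneck capacities decrease.
`Θᵏ(P_{a,n})` is antitone in `a`: cutting a partition of `{a', …, n}` at `a` gives a partition of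
`{a, …, n}` with no more parts and no larger part costs.
-/

lemma exists_le_and_lt_succ {α : Type*} [LinearOrder α] {f : ℕ → α} {a : α} :
    ∀ {m : ℕ}, f 0 ≤ a → a < f m → ∃ s < m, f s ≤ a ∧ a < f (s + 1)
  | 0, h0, hm => absurd hm h0.not_gt
  | m + 1, h0, hm => by
    by_cases h : a < f m
    · obtain ⟨s, hs, hfs⟩ := exists_le_and_lt_succ h0 h
      exact ⟨s, hs.trans (lt_add_one m), hfs⟩
    · exact ⟨m, lt_add_one m, not_lt.1 h, hm⟩

lemma ceil_div_le_ceil_div {p q d e : ℕ} (hpq : p ≤ q) (hed : e ≤ d) (he : 0 < e) :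
    (⌈(p : ℝ) / d⌉ : ℝ) ≤ ⌈(q : ℝ) / e⌉ := by
  have h : (p : ℝ) / d ≤ q / e :=
    div_le_div₀ (by positivity) (by exact_mod_cast hpq) (by exact_mod_cast he)
      (by exact_mod_cast hed)
  exact_mod_cast Int.ceil_le_ceil h

namespace DPath

variable (P : DPath)

lemma x_strictMonoOn : StrictMonoOn P.x (Set.Iic P.n) :=
  strictMonoOn_Iic_of_lt_succ P.hx

lemma x_le_x {i j : ℕ} (hij : i ≤ j) (hj : j ≤ P.n) : P.x i ≤ P.x j :=
  P.x_strictMonoOn.monotoneOn (Set.mem_Iic.2 (hij.trans hj)) (Set.mem_Iic.2 hj) hij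

lemma W_le_W {a' a i i' : ℕ} (ha : a' ≤ a) (hi : i ≤ i') : P.W a i ≤ P.W a' i' :=
  Finset.sum_le_sum_of_subset (Finset.Icc_subset_Icc ha hi)

lemma sInf_c_pos {S : Set ℕ} (hS : S.Nonempty) (h : ∀ j ∈ S, 1 ≤ j ∧ j ≤ P.n) :
    0 < sInf (P.c '' S) := by
  obtain ⟨j, hj, hcj⟩ := Nat.sInf_mem (hS.image P.c)
  rw [← hcj]
  exact P.hc j (h j hj).1 (h j hj).2

lemma cL_pos {b i : ℕ} {y : ℝ} (hib : i < b) (hbn : b ≤ P.n) (hy : P.x i < y) :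
    0 < P.cL b y i :=
  P.sInf_c_pos ⟨i + 1, le_rfl, hib, by simpa using hy⟩
    fun _ hj => ⟨Nat.one_le_of_lt hj.1, hj.2.1.trans hbn⟩

lemma cL_le_cL {b' b i : ℕ} {y' y : ℝ} (hb : b' ≤ b) (hy : y' ≤ y) (hib : i < b')
    (hiy : P.x i < y') : P.cL b y i ≤ P.cL b' y' i :=
  csInf_le_csInf (OrderBot.bddBelow _)
    (Set.Nonempty.image _ ⟨i + 1, le_rfl, hib, by simpa using hiy⟩)
    (Set.image_mono fun _ hj => ⟨hj.1, hj.2.1.trans hb, hj.2.2.trans_le hy⟩)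

lemma cR_pos {a i : ℕ} {y : ℝ} (hai : a < i) (hin : i ≤ P.n) (hy : y < P.x i) :
    0 < P.cR a y i :=
  P.sInf_c_pos ⟨i, hai, le_rfl, hy⟩ fun _ hj => ⟨Nat.one_le_of_lt hj.1, hj.2.1.trans hin⟩

lemma cR_le_cR {a' a i : ℕ} {y y' : ℝ} (ha : a' ≤ a) (hy : y ≤ y') (hai : a < i)
    (hiy : y' < P.x i) : P.cR a' y i ≤ P.cR a y' i :=
  csInf_le_csInf (OrderBot.bddBelow _) (Set.Nonempty.image _ ⟨i, hai, le_rfl, hiy⟩)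
    (Set.image_mono fun _ hj =>
      ⟨(Nat.add_le_add_right ha 1).trans hj.1, hj.2.1, hy.trans_lt hj.2.2⟩)

lemma bddAbove_thetaL_set (a b : ℕ) (y : ℝ) :
    BddAbove (insert 0 {t : ℝ | ∃ i, a ≤ i ∧ i ≤ b ∧ P.x i < y ∧ 1 ≤ P.W a i ∧
      t = (y - P.x i) * P.τ + (⌈(P.W a i : ℝ) / (P.cL b y i : ℝ)⌉ : ℝ) - 1}) := by
  refine (Set.Finite.insert _ (((Set.finite_Icc a b).image fun i =>
    (y - P.x i) * P.τ + (⌈(P.W a i : ℝ) / (P.cL b y i : ℝ)⌉ : ℝ) - 1).subset ?_)).bddAbove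
  rintro _ ⟨i, hai, hib, -, -, rfl⟩
  exact ⟨i, ⟨hai, hib⟩, rfl⟩

lemma bddAbove_thetaR_set (a b : ℕ) (y : ℝ) :
    BddAbove (insert 0 {t : ℝ | ∃ i, a ≤ i ∧ i ≤ b ∧ y < P.x i ∧ 1 ≤ P.W i b ∧
      t = (P.x i - y) * P.τ + (⌈(P.W i b : ℝ) / (P.cR a y i : ℝ)⌉ : ℝ) - 1}) := by
  refine (Set.Finite.insert _ (((Set.finite_Icc a b).image fun i =>
    (P.x i - y) * P.τ + (⌈(P.W i b : ℝ) / (P.cR a y i : ℝ)⌉ : ℝ) - 1).subset ?_)).bddAbove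
  rintro _ ⟨i, hai, hib, -, -, rfl⟩
  exact ⟨i, ⟨hai, hib⟩, rfl⟩

lemma thetaL_nonneg (a b : ℕ) (y : ℝ) : 0 ≤ ThetaL P a b y :=
  le_csSup (P.bddAbove_thetaL_set a b y) (Set.mem_insert _ _)

lemma thetaR_nonneg (a b : ℕ) (y : ℝ) : 0 ≤ ThetaR P a b y :=
  le_csSup (P.bddAbove_thetaR_set a b y) (Set.mem_insert _ _)

lemma theta_nonneg (a b : ℕ) (y : ℝ) : 0 ≤ Theta P a b y :=
  (P.thetaL_nonneg a b y).trans (le_max_left _ _)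

lemma theta1_nonneg (a b : ℕ) : 0 ≤ Theta1 P a b :=
  Real.sInf_nonneg fun _ ⟨y, _, hy⟩ => hy ▸ P.theta_nonneg a b y

lemma le_thetaL {a b i : ℕ} {y : ℝ} (hai : a ≤ i) (hib : i ≤ b) (hiy : P.x i < y)
    (hW : 1 ≤ P.W a i) :
    (y - P.x i) * P.τ + (⌈(P.W a i : ℝ) / (P.cL b y i : ℝ)⌉ : ℝ) - 1 ≤ ThetaL P a b y :=
  le_csSup (P.bddAbove_thetaL_set a b y) (Or.inr ⟨i, hai, hib, hiy, hW, rfl⟩)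

lemma le_thetaR {a b i : ℕ} {y : ℝ} (hai : a ≤ i) (hib : i ≤ b) (hiy : y < P.x i)
    (hW : 1 ≤ P.W i b) :
    (P.x i - y) * P.τ + (⌈(P.W i b : ℝ) / (P.cR a y i : ℝ)⌉ : ℝ) - 1 ≤ ThetaR P a b y :=
  le_csSup (P.bddAbove_thetaR_set a b y) (Or.inr ⟨i, hai, hib, hiy, hW, rfl⟩)

lemma thetaL_le {a b : ℕ} {y M : ℝ} (hM : 0 ≤ M)
    (h : ∀ i, a ≤ i → i ≤ b → P.x i < y → 1 ≤ P.W a i →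
      (y - P.x i) * P.τ + (⌈(P.W a i : ℝ) / (P.cL b y i : ℝ)⌉ : ℝ) - 1 ≤ M) :
    ThetaL P a b y ≤ M :=
  csSup_le (Set.insert_nonempty _ _) fun
    | _, Or.inl rfl => hM
    | _, Or.inr ⟨i, hai, hib, hiy, hW, ht⟩ => ht ▸ h i hai hib hiy hW

lemma thetaR_le {a b : ℕ} {y M : ℝ} (hM : 0 ≤ M)
    (h : ∀ i, a ≤ i → i ≤ b → y < P.x i → 1 ≤ P.W i b →
      (P.x i - y) * P.τ + (⌈(P.W i b : ℝ) / (P.cR a y i : ℝ)⌉ : ℝ) - 1 ≤ M) :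
    ThetaR P a b y ≤ M :=
  csSup_le (Set.insert_nonempty _ _) fun
    | _, Or.inl rfl => hM
    | _, Or.inr ⟨i, hai, hib, hiy, hW, ht⟩ => ht ▸ h i hai hib hiy hW

lemma thetaL_le_thetaL {a' a b' b : ℕ} {y' y : ℝ} (ha : a' ≤ a) (hb : b' ≤ b) (hbn : b ≤ P.n)
    (hy : y' ≤ max y (P.x a)) (hyb : y' ≤ P.x b') : ThetaL P a b' y' ≤ ThetaL P a' b y := by
  refine P.thetaL_le (P.thetaL_nonneg a' b y) fun i hai hib hiy hW => ?_
  have hib' : i < b' := hib.lt_of_ne (by rintro rfl; linarith)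
  have hyy : y' ≤ y := (le_max_iff.1 hy).resolve_right fun h =>
    (P.x_le_x hai (hib.trans (hb.trans hbn))).not_gt (hiy.trans_le h)
  have hWa : P.W a i ≤ P.W a' i := P.W_le_W ha le_rfl
  have hdist := mul_le_mul_of_nonneg_right (sub_le_sub_right hyy (P.x i)) P.hτ.le
  have hceil := ceil_div_le_ceil_div hWa (P.cL_le_cL hb hyy hib' hiy)
    (P.cL_pos (hib'.trans_le hb) hbn (hiy.trans_le hyy))
  refine le_trans ?_ (P.le_thetaL (ha.trans hai) (hib.trans hb) (hiy.trans_le hyy) (hW.trans hWa))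
  linarith

lemma thetaR_le_thetaR {a' a b' b : ℕ} {y' y : ℝ} (ha : a' ≤ a) (hb : b' ≤ b) (hbn : b ≤ P.n)
    (hy : min y (P.x b') ≤ y') (hay : P.x a ≤ y') : ThetaR P a b' y' ≤ ThetaR P a' b y := by
  refine P.thetaR_le (P.thetaR_nonneg a' b y) fun i hai hib hiy hW => ?_
  have hai' : a < i := hai.lt_of_ne (by rintro rfl; linarith)
  have hyy : y ≤ y' := (min_le_iff.1 hy).resolve_right fun h =>
    (P.x_le_x hib (hb.trans hbn)).not_gt (h.trans_lt hiy)
  have hWb : P.W i b' ≤ P.W i b := P.W_le_W le_rfl hb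
  have hdist := mul_le_mul_of_nonneg_right (sub_le_sub_left hyy (P.x i)) P.hτ.le
  have hceil := ceil_div_le_ceil_div hWb (P.cR_le_cR ha hyy hai' hiy)
    (P.cR_pos (ha.trans_lt hai') (hib.trans (hb.trans hbn)) (hyy.trans_lt hiy))
  refine le_trans ?_ (P.le_thetaR (ha.trans hai) (hib.trans hb) (hyy.trans_lt hiy) (hW.trans hWb))
  linarith

lemma theta_clamp_le_theta {a' a b' b : ℕ} (y : ℝ) (ha : a' ≤ a) (hab : a ≤ b') (hb : b' ≤ b)
    (hbn : b ≤ P.n) : Theta P a b' (max (P.x a) (min y (P.x b'))) ≤ Theta P a' b y :=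
  max_le_max
    (P.thetaL_le_thetaL ha hb hbn
      (max_le (le_max_right _ _) ((min_le_left _ _).trans (le_max_left _ _)))
      (max_le (P.x_le_x hab (hb.trans hbn)) (min_le_right _ _)))
    (P.thetaR_le_thetaR ha hb hbn (le_max_right _ _) (le_max_left _ _))

lemma theta1_le_theta {a b : ℕ} {y : ℝ} (hy : y ∈ Set.Icc (P.x a) (P.x b)) :
    Theta1 P a b ≤ Theta P a b y :=
  csInf_le ⟨0, fun _ ⟨z, _, hz⟩ => hz ▸ P.theta_nonneg a b z⟩ ⟨y, hy, rfl⟩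

theorem theta1_le_theta1 {a' a b' b : ℕ} (ha : a' ≤ a) (hab : a ≤ b') (hb : b' ≤ b)
    (hbn : b ≤ P.n) : Theta1 P a b' ≤ Theta1 P a' b := by
  refine le_csInf ((Set.nonempty_Icc.2 (P.x_le_x (ha.trans (hab.trans hb)) hbn)).image _) ?_
  rintro _ ⟨y, -, rfl⟩
  refine le_trans (P.theta1_le_theta ⟨le_max_left _ _, ?_⟩) (P.theta_clamp_le_theta y ha hab hb hbn)
  exact max_le (P.x_le_x hab (hb.trans hbn)) (min_le_right _ _)

lemma thetaK_le_iSup {K a b m : ℕ} {f : ℕ → ℕ} (hm : 1 ≤ m) (hmK : m ≤ K) (hf0 : f 0 = a)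
    (hfm : f m = b + 1) (hf : ∀ j < m, f j < f (j + 1)) :
    ThetaK P K a b ≤ ⨆ j : Fin m, Theta1 P (f j) (f (j + 1) - 1) :=
  csInf_le
    ⟨0, fun _ ⟨_, _, _, _, _, _, _, ht⟩ => ht ▸ Real.iSup_nonneg fun _ => P.theta1_nonneg _ _⟩
    ⟨m, f, hm, hmK, hf0, hfm, hf, rfl⟩

lemma thetaK_le_iSup_of_le {K a' a b m : ℕ} {f : ℕ → ℕ} (ha : a' ≤ a) (hab : a ≤ b)
    (hbn : b ≤ P.n) (hmK : m ≤ K) (hf0 : f 0 = a') (hfm : f m = b + 1)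
    (hf : ∀ j < m, f j < f (j + 1)) :
    ThetaK P K a b ≤ ⨆ j : Fin m, Theta1 P (f j) (f (j + 1) - 1) := by
  have hmono := (strictMonoOn_Iic_of_lt_succ hf).monotoneOn
  obtain ⟨s, hsm, hsa, has⟩ := exists_le_and_lt_succ (m := m) (hf0.trans_le ha) (by omega)
  have hcut : ∀ j, j + s < m → a < f (j + s + 1) := fun j hj =>
    has.trans_le (hmono (Set.mem_Iic.2 (by omega)) (Set.mem_Iic.2 (by omega)) (by omega))
  have hle_b : ∀ j, j < m → f (j + 1) ≤ b + 1 := fun j hj =>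
    hfm ▸ hmono (Set.mem_Iic.2 hj) (Set.mem_Iic.2 le_rfl) hj
  -- the parts `s, s + 1, …` of `f`, the first one shortened to start at `a`
  set g : ℕ → ℕ := fun j => max a (f (j + s)) with hg
  have hg_succ : ∀ j, j + s < m → g (j + 1) = f (j + s + 1) := fun j hj => by
    simp only [hg, Nat.add_right_comm j 1 s]
    exact max_eq_right (hcut j hj).le
  have hg0 : g 0 = a := by simp only [hg, zero_add]; exact max_eq_left hsa
  have hgm : g (m - s) = b + 1 := by
    simp only [hg]
    rw [Nat.sub_add_cancel hsm.le, hfm]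
    exact max_eq_right (by omega)
  have hgs : ∀ j < m - s, g j < g (j + 1) := fun j hj => by
    rw [hg_succ j (by omega)]
    exact max_lt (hcut j (by omega)) (hf _ (by omega))
  have : Nonempty (Fin (m - s)) := ⟨⟨0, by omega⟩⟩
  refine (P.thetaK_le_iSup (by omega) (by omega) hg0 hgm hgs).trans (ciSup_le fun j => ?_)
  have hj : j.1 + s < m := by omega
  refine le_ciSup_of_le (Set.finite_range _).bddAbove ⟨j + s, hj⟩ ?_
  rw [hg_succ j hj]
  exact P.theta1_le_theta1 (le_max_right _ _)
    (Nat.le_sub_one_of_lt (max_lt (hcut j hj) (hf _ hj))) le_rfl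
    (Nat.sub_le_of_le_add ((hle_b _ hj).trans (Nat.succ_le_succ hbn)))

theorem thetaK_le_thetaK {K a' a b : ℕ} (hK : 1 ≤ K) (ha : a' ≤ a) (hab : a ≤ b)
    (hbn : b ≤ P.n) : ThetaK P K a b ≤ ThetaK P K a' b := by
  refine le_csInf ⟨_, 1, fun j => if j = 0 then a' else b + 1, le_rfl, hK, rfl, rfl,
    fun j hj => ?_, rfl⟩ ?_
  · obtain rfl : j = 0 := by omega
    show a' < b + 1
    omega
  · rintro _ ⟨m, f, -, hmK, hf0, hfm, hf, rfl⟩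
    exact P.thetaK_le_iSup_of_le ha hab hbn hmK hf0 hfm hf

end DPath

theorem stmt15_general (P : DPath) (k : ℕ) (hk : 2 ≤ k)
    (i' i : ℕ) (hi'i : i' ≤ i) (hi : i < P.n)
    (h : Theta1 P 0 i < ThetaK P (k - 1) (i + 1) P.n) :
    Theta1 P 0 i' < ThetaK P (k - 1) (i' + 1) P.n :=
  calc Theta1 P 0 i' ≤ Theta1 P 0 i := P.theta1_le_theta1 le_rfl (Nat.zero_le _) hi'i hi.le
    _ < ThetaK P (k - 1) (i + 1) P.n := h
    _ ≤ ThetaK P (k - 1) (i' + 1) P.n :=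
      P.thetaK_le_thetaK (by omega) (Nat.succ_le_succ hi'i) hi le_rfl

/-- the set of indices `i ∈ {0,…,n−1}` with
`Θ¹(P_{0,i}) < Θ^{k−1}(P_{i+1,n})` is downward closed. -/
theorem stmt15 (P : DPath) (hn : 1 ≤ P.n) (k : ℕ) (hk : 2 ≤ k)
    (i' i : ℕ) (hi'i : i' ≤ i) (hi : i < P.n)
    (h : Theta1 P 0 i < ThetaK P (k - 1) (i + 1) P.n) :
    Theta1 P 0 i' < ThetaK P (k - 1) (i' + 1) P.n :=
  stmt15_general P k hk i' i hi'i hi h
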